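/- (Optimal discrimination requires high inconclusive rate.) For every γ ∈ (1/√2, 1], no γ-admissible triple (Π₀,Π₁,Π_∅) attains the optimal normalized guessing probability, i.e., every γ-admissible triple satisfies V/γ² ≤ (1/2)·(1 + 1/(2√2·γ²)) < 1/2 + 1/(2√2); the maximal value 1/2 + 1/(2√2) is attainable only when γ ≤ 1/√2. -/

import Mathlib

open Matrix Complex Kronecker BigOperators ComplexOrder

noncomputable section

abbrev Mat2 := Matrix (Fin 2) (Fin 2) ℂ
abbrev Mat4 := Matrix (Fin 2 × Fin 2) (Fin 2 × Fin 2) ℂ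

/-- Pauli X matrix -/
def PX : Mat2 := !![0, 1; 1, 0]

/-- Pauli Y matrix -/
def PY : Mat2 := !![0, -Complex.I; Complex.I, 0]

/-- sign (−1)^b for a bit b -/
def bsign (b : Bool) : ℂ := if b then -1 else 1

/-- boolean function f(x̄,ȳ) = (x₁·y₁) XOR x₂ XOR y₂ -/
def fxy (x y : Bool × Bool) : Bool := (((x.1 && y.1)).xor x.2).xor y.2

/-- qubit input states ω_{x̄}: ω_{(0,x₂)} = (I+(−1)^{x₂}X)/2, ω_{(1,x₂)} = (I+(−1)^{x₂}Y)/2 -/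
def omg (x : Bool × Bool) : Mat2 :=
  (1/2 : ℂ) • ((1 : Mat2) + bsign x.2 • (if x.1 then PY else PX))

/-- qubit input states τ_{ȳ} = (I+(−1)^{y₂}(X+(−1)^{y₁}Y)/√2)/2 -/
def tau (y : Bool × Bool) : Mat2 :=
  (1/2 : ℂ) • ((1 : Mat2) + (bsign y.2 / (Real.sqrt 2 : ℂ)) • (PX + bsign y.1 • PY))

/-- averaged input states ρ₀ (for c = false) and ρ₁ (for c = true) -/
def rho (c : Bool) : Mat4 :=
  (1/8 : ℂ) • ∑ x : Bool × Bool, ∑ y : Bool × Bool,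
    (if fxy x y = c then omg x ⊗ₖ tau y else 0)

/-- standard basis vectors of ℂ⁴ ≅ ℂ² ⊗ ℂ² -/
def ket (i j : Fin 2) : (Fin 2 × Fin 2) → ℂ := fun p => if p = (i, j) then 1 else 0

def PhiP : (Fin 2 × Fin 2) → ℂ := fun p => (1 / (Real.sqrt 2 : ℂ)) * (ket 0 0 p + ket 1 1 p)
def PhiM : (Fin 2 × Fin 2) → ℂ := fun p => (1 / (Real.sqrt 2 : ℂ)) * (ket 0 0 p - ket 1 1 p)
def PsiP : (Fin 2 × Fin 2) → ℂ := fun p => (1 / (Real.sqrt 2 : ℂ)) * (ket 0 1 p + ket 1 0 p)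
def PsiM : (Fin 2 × Fin 2) → ℂ := fun p => (1 / (Real.sqrt 2 : ℂ)) * (ket 0 1 p - ket 1 0 p)

/-- rank one projector |v⟩⟨v| -/
def proj (v : (Fin 2 × Fin 2) → ℂ) : Mat4 := Matrix.vecMulVec v (star v)

/-- a γ-admissible measurement triple -/
def Admissible (γ : ℝ) (P0 P1 Pe : Mat4) : Prop :=
  P0.PosSemidef ∧ P1.PosSemidef ∧ Pe.PosSemidef ∧
  P0 + P1 + Pe = 1 ∧
  ∀ x y : Bool × Bool, ((omg x ⊗ₖ tau y) * Pe).trace = 1 - (γ : ℂ)^2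

/-- guessing value V = (1/2)·Tr[ρ₀Π₀ + ρ₁Π₁] (a real number) -/
def Gval (P0 P1 : Mat4) : ℝ := (1/2) * ((rho false * P0 + rho true * P1).trace).re

/-! Averaging over the inputs gives `ρ_c = I/4 ± (|ψ⁺⟩⟨ψ⁺| - |ψ⁻⟩⟨ψ⁻|)/(4√2)`, because
`∑ (-1)^f ω ⊗ τ = √2 (X ⊗ X + Y ⊗ Y)` and `X ⊗ X + Y ⊗ Y = 2 (|ψ⁺⟩⟨ψ⁺| - |ψ⁻⟩⟨ψ⁻|)`.
Summing the loss constraint over the sixteen inputs, where `∑ ω ⊗ τ = 4 I`, gives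
`Tr Π_∅ = 4 (1 - γ²)`, hence `Tr (Π₀ + Π₁) = 4 γ²` and
`2 V = γ² + (⟨ψ⁺|Π₀ - Π₁|ψ⁺⟩ - ⟨ψ⁻|Π₀ - Π₁|ψ⁻⟩) / (4√2)`.
Both expectation values lie in `[-1, 1]` since `Π₀ + Π₁ + Π_∅ = I`, so
`V ≤ γ²/2 + 1/(4√2)`, which is below `γ² (1/2 + 1/(2√2))` exactly when `γ² > 1/2`. -/

lemma trace_proj_mul (v : (Fin 2 × Fin 2) → ℂ) (M : Mat4) :
    (proj v * M).trace = star v ⬝ᵥ (M *ᵥ v) := by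
  rw [proj, vecMulVec_mul, trace_vecMulVec, dotProduct_comm, ← dotProduct_mulVec]

lemma re_dotProduct_sub_mulVec_le_one {n : Type*} [Fintype n] [DecidableEq n]
    {P₀ P₁ P₂ : Matrix n n ℂ} (h₁ : P₁.PosSemidef) (h₂ : P₂.PosSemidef) (hsum : P₀ + P₁ + P₂ = 1)
    {v : n → ℂ} (hv : star v ⬝ᵥ v = 1) :
    (star v ⬝ᵥ ((P₀ - P₁) *ᵥ v)).re ≤ 1 := by
  have hP : P₀ - P₁ = 1 - (2 : ℂ) • P₁ - P₂ := by rw [← hsum]; module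
  have hq₁ := (Complex.nonneg_iff.mp (h₁.dotProduct_mulVec_nonneg v)).1
  have hq₂ := (Complex.nonneg_iff.mp (h₂.dotProduct_mulVec_nonneg v)).1
  rw [hP, sub_mulVec, sub_mulVec, one_mulVec, smul_mulVec, dotProduct_sub, dotProduct_sub,
    dotProduct_smul, hv]
  simp only [Complex.sub_re, Complex.one_re, smul_eq_mul, Complex.mul_re, Complex.re_ofNat,
    Complex.im_ofNat, zero_mul, sub_zero]
  linarith

lemma sqrt_two_mul_sqrt_two : (Real.sqrt 2 : ℂ) * (Real.sqrt 2 : ℂ) = 2 := by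
  norm_cast
  rw [Real.mul_self_sqrt zero_le_two]

lemma sqrt_two_ne_zero : (Real.sqrt 2 : ℂ) ≠ 0 := by
  exact_mod_cast (Real.sqrt_pos.mpr zero_lt_two).ne'

lemma star_PsiP_dotProduct_self : star PsiP ⬝ᵥ PsiP = 1 := by
  simp only [dotProduct, Pi.star_apply, PsiP, one_div, ket, Fin.isValue, Prod.ext_iff, star_mul',
    star_inv₀, RCLike.star_def, conj_ofReal, star_add, MonoidWithZeroHom.map_ite_one_zero,
    Fintype.sum_prod_type, Fin.sum_univ_two, zero_ne_one, and_false, ↓reduceIte, and_true,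
    zero_add, mul_ite, mul_one, mul_zero, ite_mul, zero_mul, one_ne_zero, add_zero]
  field_simp
  rw [sq, sqrt_two_mul_sqrt_two]
  norm_num

lemma star_PsiM_dotProduct_self : star PsiM ⬝ᵥ PsiM = 1 := by
  simp only [dotProduct, Pi.star_apply, PsiM, one_div, ket, Fin.isValue, Prod.ext_iff, star_mul',
    star_inv₀, RCLike.star_def, conj_ofReal, star_sub, MonoidWithZeroHom.map_ite_one_zero,
    Fintype.sum_prod_type, Fin.sum_univ_two, zero_ne_one, and_false, ↓reduceIte, and_true,
    zero_sub, mul_neg, mul_ite, mul_one, mul_zero, neg_mul, ite_mul, zero_mul, one_ne_zero,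
    sub_zero, neg_zero, zero_add, neg_neg, add_zero]
  field_simp
  rw [sq, sqrt_two_mul_sqrt_two]
  norm_num

lemma proj_PsiP_sub_proj_PsiM :
    proj PsiP - proj PsiM = (1/2 : ℂ) • (PX ⊗ₖ PX + PY ⊗ₖ PY) := by
  have := sqrt_two_ne_zero
  ext ⟨i, j⟩ ⟨k, l⟩
  fin_cases i <;> fin_cases j <;> fin_cases k <;> fin_cases l <;>
    simp [proj, PsiP, PsiM, ket, PX, PY, vecMulVec_apply, Prod.ext_iff, kroneckerMap_apply] <;>
    field_simp <;>
    rw [sq, sqrt_two_mul_sqrt_two]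

lemma sum_omg_kronecker_tau :
    ∑ x : Bool × Bool, ∑ y : Bool × Bool, omg x ⊗ₖ tau y = (4 : ℂ) • (1 : Mat4) := by
  simp only [Fintype.sum_prod_type, Fintype.sum_bool, omg, tau, bsign, Bool.false_eq_true,
    reduceIte, add_kronecker, kronecker_add, smul_kronecker, kronecker_smul]
  rw [← one_kronecker_one]
  module

lemma sum_bsign_fxy_smul_omg_kronecker_tau :
    ∑ x : Bool × Bool, ∑ y : Bool × Bool, bsign (fxy x y) • (omg x ⊗ₖ tau y)
      = ((2 : ℂ) / (Real.sqrt 2 : ℂ)) • (PX ⊗ₖ PX + PY ⊗ₖ PY) := by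
  simp only [Fintype.sum_prod_type, Fintype.sum_bool, omg, tau, fxy, bsign,
    Bool.xor_true, Bool.xor_false, Bool.and_true, Bool.and_false,
    Bool.not_true, Bool.not_false, Bool.false_eq_true, reduceIte,
    add_kronecker, kronecker_add, smul_kronecker, kronecker_smul]
  module

lemma ite_eq_smul_add_bsign_smul (a c : Bool) (M : Mat4) :
    (if a = c then M else 0) = (1/2 : ℂ) • M + (bsign c / 2) • bsign a • M := by
  cases a <;> cases c <;> simp only [bsign] <;> norm_num <;> module

lemma rho_eq (c : Bool) :
    rho c = (1/4 : ℂ) • 1 + (bsign c / (4 * Real.sqrt 2)) • (proj PsiP - proj PsiM) := by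
  simp only [rho, ite_eq_smul_add_bsign_smul, Finset.sum_add_distrib, ← Finset.smul_sum,
    sum_omg_kronecker_tau, sum_bsign_fxy_smul_omg_kronecker_tau, proj_PsiP_sub_proj_PsiM]
  module

lemma trace_rho_mul_add_rho_mul (P0 P1 : Mat4) :
    (rho false * P0 + rho true * P1).trace
      = (P0 + P1).trace / 4 + (star PsiP ⬝ᵥ ((P0 - P1) *ᵥ PsiP)
          - star PsiM ⬝ᵥ ((P0 - P1) *ᵥ PsiM)) / (4 * Real.sqrt 2) := by
  simp only [rho_eq, bsign, Bool.false_eq_true, if_true, if_false, add_mul, sub_mul, smul_mul,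
    one_mul, trace_add, trace_sub, trace_smul, trace_proj_mul, sub_mulVec, dotProduct_sub,
    smul_eq_mul]
  ring

lemma trace_add_of_admissible {γ : ℝ} {P0 P1 Pe : Mat4} (h : Admissible γ P0 P1 Pe) :
    (P0 + P1).trace = 4 * (γ : ℂ) ^ 2 := by
  obtain ⟨-, -, -, hsum, hloss⟩ := h
  have hPe : (4 : ℂ) * Pe.trace = 16 * (1 - (γ : ℂ) ^ 2) := by
    calc (4 : ℂ) * Pe.trace
        = ((∑ x : Bool × Bool, ∑ y : Bool × Bool, omg x ⊗ₖ tau y) * Pe).trace := by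
          rw [sum_omg_kronecker_tau, smul_mul, one_mul, trace_smul, smul_eq_mul]
      _ = ∑ x : Bool × Bool, ∑ y : Bool × Bool, ((omg x ⊗ₖ tau y) * Pe).trace := by
          simp only [Finset.sum_mul, trace_sum]
      _ = 16 * (1 - (γ : ℂ) ^ 2) := by
          simp only [hloss, Finset.sum_const, Finset.card_univ, Fintype.card_prod,
            Fintype.card_bool, nsmul_eq_mul]
          norm_num
          ring
  have htr : (P0 + P1).trace + Pe.trace = 4 := by
    rw [← trace_add, hsum, trace_one]
    simp [Fintype.card_prod]
  linear_combination htr - hPe / 4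

lemma Gval_le_of_admissible {γ : ℝ} {P0 P1 Pe : Mat4} (h : Admissible γ P0 P1 Pe) :
    Gval P0 P1 ≤ γ ^ 2 / 2 + 1 / (4 * Real.sqrt 2) := by
  have htr := trace_add_of_admissible h
  obtain ⟨h0, h1, he, hsum, -⟩ := h
  have hP : (star PsiP ⬝ᵥ ((P0 - P1) *ᵥ PsiP)).re ≤ 1 :=
    re_dotProduct_sub_mulVec_le_one h1 he hsum star_PsiP_dotProduct_self
  have hM : (star PsiM ⬝ᵥ ((P1 - P0) *ᵥ PsiM)).re ≤ 1 :=
    re_dotProduct_sub_mulVec_le_one h0 he (by rw [← hsum, add_comm P1]) star_PsiM_dotProduct_self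
  rw [← neg_sub, neg_mulVec, dotProduct_neg, Complex.neg_re] at hM
  have hc : (4 * Real.sqrt 2 : ℂ) = ((4 * Real.sqrt 2 : ℝ) : ℂ) := by push_cast; ring
  have hγ : 4 * (γ : ℂ) ^ 2 = ((4 * γ ^ 2 : ℝ) : ℂ) := by push_cast; ring
  rw [Gval, trace_rho_mul_add_rho_mul, htr, hc, hγ, Complex.add_re,
    Complex.div_ofReal_re, Complex.div_ofNat_re, Complex.ofReal_re, Complex.sub_re]
  have hdiff : (star PsiP ⬝ᵥ ((P0 - P1) *ᵥ PsiP)).re - (star PsiM ⬝ᵥ ((P0 - P1) *ᵥ PsiM)).re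
      ≤ 2 := by linarith
  have hs : 0 < 4 * Real.sqrt 2 := by positivity
  have := div_le_div_of_nonneg_right hdiff hs.le
  linarith [show 2 / (4 * Real.sqrt 2) = 2 * (1 / (4 * Real.sqrt 2)) by ring]

theorem no_optimal_discrimination_low_loss_general (γ : ℝ) (hγ : 1/Real.sqrt 2 < γ) :
    (∀ P0 P1 Pe : Mat4, Admissible γ P0 P1 Pe →
        Gval P0 P1 / γ^2 ≤ (1/2) * (1 + 1/(γ^2 * (2*Real.sqrt 2)))) ∧
    (1/2) * (1 + 1/(γ^2 * (2*Real.sqrt 2))) < 1/2 + 1/(2*Real.sqrt 2) := by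
  have hs : 0 < Real.sqrt 2 := Real.sqrt_pos.mpr zero_lt_two
  have hγ₀ : 0 < γ := (by positivity : (0 : ℝ) < 1 / Real.sqrt 2).trans hγ
  have hγsq : 1 / 2 < γ ^ 2 := by
    have := pow_lt_pow_left₀ hγ (by positivity) two_ne_zero
    rwa [div_pow, Real.sq_sqrt zero_le_two, one_pow] at this
  refine ⟨fun P0 P1 Pe h => ?_, ?_⟩
  · rw [div_le_iff₀ (by positivity)]
    calc Gval P0 P1 ≤ γ ^ 2 / 2 + 1 / (4 * Real.sqrt 2) := Gval_le_of_admissible h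
      _ = (1/2) * (1 + 1/(γ^2 * (2*Real.sqrt 2))) * γ ^ 2 := by field_simp; ring
  · have : 1 / (γ ^ 2 * (2 * Real.sqrt 2)) < 2 / (2 * Real.sqrt 2) := by
      rw [div_lt_div_iff₀ (by positivity) (by positivity)]
      nlinarith
    linarith [show 2 / (2 * Real.sqrt 2) = 2 * (1 / (2 * Real.sqrt 2)) by ring]

/-- for γ ∈ (1/√2, 1], every γ-admissible triple satisfies
V/γ² ≤ (1/2)(1 + 1/(2√2γ²)) < 1/2 + 1/(2√2), so the maximal value 1/2 + 1/(2√2)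
is never attained in the low-loss regime. -/
theorem no_optimal_discrimination_low_loss (γ : ℝ) (hγ : 1/Real.sqrt 2 < γ) (hγ' : γ ≤ 1) :
    (∀ P0 P1 Pe : Mat4, Admissible γ P0 P1 Pe →
        Gval P0 P1 / γ^2 ≤ (1/2) * (1 + 1/(γ^2 * (2*Real.sqrt 2)))) ∧
    (1/2) * (1 + 1/(γ^2 * (2*Real.sqrt 2))) < 1/2 + 1/(2*Real.sqrt 2) :=
  no_optimal_discrimination_low_loss_general γ hγ
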